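/- arXiv:2408.03742 — 3 statements merged into one kernel-verified Lean document; each statement's English description precedes it below -/
import Mathlib

section
/- Let C be an [n,k] linear binary code with parity-check matrix H, i.e., H is an (n−k)×n matrix over F_2 of rank n−k with C = {x ∈ F_2^n : Hx = 0}. Let Z be a random vector on F_2^n with pmf P_Z and let X_C be uniform on C, independent of Z. Then d_TV(P_{HZ}, U_{n−k}) = d_TV(P_{X_C + Z}, U_n), where P_{HZ}(u) = Σ_{z : Hz = u} P_Z(z) is the pmf of HZ on F_2^{n−k} and P_{X_C+Z} is the pmf of X_C + Z on F_2^n. In particular, Z ε-smooths C (i.e., d_TV(P_{X_C+Z}, U_n) ≤ ε) if and only if d_TV(P_{HZ}, U_{n−k}) ≤ ε. -/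
open Finset Filter
open scoped Classical BigOperators Topology

abbrev BV (n : ℕ) := Fin n → ZMod 2

def wt {n : ℕ} (x : BV n) : ℕ := (Finset.univ.filter (fun i => x i ≠ 0)).card

def dotp {n : ℕ} (x y : BV n) : ZMod 2 := ∑ i, x i * y i

def IsPMF {α : Type*} [Fintype α] (P : α → ℝ) : Prop :=
  (∀ x, 0 ≤ P x) ∧ ∑ x, P x = 1

noncomputable def dTV {α : Type*} [Fintype α] (P Q : α → ℝ) : ℝ :=
  (1/2) * ∑ x, |P x - Q x|

noncomputable def unif (α : Type*) [Fintype α] : α → ℝ := fun _ => 1 / (Fintype.card α)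

noncomputable def unifOn {α : Type*} [Fintype α] (S : Set α) : α → ℝ :=
  fun x => if x ∈ S then 1 / (Nat.card S) else 0

noncomputable def conv {n : ℕ} (P Q : BV n → ℝ) : BV n → ℝ :=
  fun x => ∑ y, P y * Q (x - y)

noncomputable def FT {n : ℕ} (f : BV n → ℝ) : BV n → ℝ :=
  fun y => (1 / 2^n) * ∑ x, f x * (if dotp x y = 0 then (1:ℝ) else -1)

noncomputable def Kraw (n w i : ℕ) : ℝ :=
  ∑ j ∈ Finset.range (w+1), (-1:ℝ)^j * (Nat.choose i j) * (Nat.choose (n-i) (w-j))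

def Vball (n t : ℕ) : ℕ := ∑ j ∈ Finset.range (t+1), Nat.choose n j

noncomputable def pmfMap {m n : ℕ} (G : Matrix (Fin m) (Fin n) (ZMod 2)) (P : BV n → ℝ) :
    BV m → ℝ :=
  fun u => ∑ z ∈ Finset.univ.filter (fun z => G.mulVec z = u), P z

noncomputable def biasOf {n : ℕ} (e : BV n) (P : BV n → ℝ) : ℝ :=
  1/2 - ∑ z ∈ Finset.univ.filter (fun z => dotp e z = 1), P z

noncomputable def bitPMF {n : ℕ} (e : BV n) (P : BV n → ℝ) : ZMod 2 → ℝ :=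
  fun b => ∑ z ∈ Finset.univ.filter (fun z => dotp e z = b), P z

noncomputable def jointPMF {m n : ℕ} (G : Matrix (Fin m) (Fin n) (ZMod 2)) (e : BV n)
    (P : BV n → ℝ) : BV m × ZMod 2 → ℝ :=
  fun p => ∑ z ∈ Finset.univ.filter (fun z => G.mulVec z = p.1 ∧ dotp e z = p.2), P z

noncomputable def prodPMF {m : ℕ} (Pb : ZMod 2 → ℝ) : BV m × ZMod 2 → ℝ :=
  fun p => (1 / 2^m) * Pb p.2

def dualSet {n : ℕ} (C : Set (BV n)) : Set (BV n) := {y | ∀ c ∈ C, dotp y c = 0}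

def rowSpan {k n : ℕ} (G : Matrix (Fin k) (Fin n) (ZMod 2)) : Submodule (ZMod 2) (BV n) :=
  Submodule.span (ZMod 2) (Set.range (fun i => G i))

theorem smoothing_syndrome_characterization (n k : ℕ) (hk : k ≤ n)
    (H : Matrix (Fin (n - k)) (Fin n) (ZMod 2)) (hrank : H.rank = n - k)
    (P : BV n → ℝ) (hP : IsPMF P) :
    dTV (pmfMap H P) (unif (BV (n - k)))
      = dTV (conv (unifOn {x : BV n | H.mulVec x = 0}) P) (unif (BV n)) ∧
    ∀ ε : ℝ,
      (dTV (conv (unifOn {x : BV n | H.mulVec x = 0}) P) (unif (BV n)) ≤ ε ↔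
        dTV (pmfMap H P) (unif (BV (n - k))) ≤ ε) := by
  -- surjectivity of the syndrome map
  have hsurj : Function.Surjective H.mulVec := by
    have h1 : LinearMap.range H.mulVecLin = ⊤ := by
      apply Submodule.eq_top_of_finrank_eq
      rw [← Matrix.rank, hrank, Module.finrank_fin_fun]
    exact fun u => LinearMap.range_eq_top.mp h1 u
  set C : Finset (BV n) := Finset.univ.filter (fun z => H.mulVec z = 0) with hC
  set c : ℕ := C.card with hc
  -- all fibers have the same size c
  have hfiber : ∀ u : BV (n - k),
      (Finset.univ.filter (fun z => H.mulVec z = u)).card = c := by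
    intro u
    obtain ⟨z₀, hz₀⟩ := hsurj u
    rw [hc, hC]
    apply Finset.card_bij' (fun z _ => z - z₀) (fun z _ => z + z₀)
    · intro a ha
      simp only [mem_filter, mem_univ, true_and] at ha ⊢
      rw [Matrix.mulVec_sub, ha, hz₀, sub_self]
    · intro a ha
      simp only [mem_filter, mem_univ, true_and] at ha ⊢
      rw [Matrix.mulVec_add, ha, hz₀, zero_add]
    · intro a _; simp
    · intro a _; simp
  have hc_pos : 0 < c := by
    rw [hc, hC]
    apply Finset.card_pos.mpr
    exact ⟨0, by simp [Matrix.mulVec_zero]⟩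
  -- Nat.card of the set equals c
  have hNatCard : Nat.card {x : BV n | H.mulVec x = 0} = c := by
    rw [hc, hC]
    simp [Nat.card_eq_fintype_card, Fintype.card_subtype]
  -- counting: c * 2^(n-k) = 2^n
  have hcount : (c : ℝ) * 2 ^ (n - k) = 2 ^ n := by
    have h1 : (Finset.univ : Finset (BV n)).card
        = ∑ u : BV (n - k), (Finset.univ.filter (fun z => H.mulVec z = u)).card := by
      apply Finset.card_eq_sum_card_fiberwise
      intro x _; exact Finset.mem_univ _
    have h2 : (2 : ℕ) ^ n = ∑ _u : BV (n - k), c := by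
      rw [← Finset.sum_congr rfl (fun u _ => hfiber u), ← h1]
      simp
    have h3 : (2:ℕ) ^ n = 2 ^ (n - k) * c := by
      rw [h2, Finset.sum_const, smul_eq_mul]
      congr 1
      · simp [Fintype.card_fun]
    have h4 : (2:ℝ)^n = 2^(n-k) * c := by exact_mod_cast h3
    linarith
  -- conv value
  have hconv : ∀ x : BV n,
      conv (unifOn {x : BV n | H.mulVec x = 0}) P x
        = (1 / c) * pmfMap H P (H.mulVec x) := by
    intro x
    show (∑ y, unifOn {x : BV n | H.mulVec x = 0} y * P (x - y)) = _
    calc ∑ y, unifOn {x : BV n | H.mulVec x = 0} y * P (x - y)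
        = ∑ y : BV n, (if H.mulVec y = 0 then (1/(c:ℝ)) * P (x - y) else 0) := by
          refine Finset.sum_congr rfl fun y _ => ?_
          unfold unifOn
          by_cases h : H.mulVec y = 0
          · rw [if_pos (show y ∈ {x : BV n | H.mulVec x = 0} from h), if_pos h, hNatCard]
          · rw [if_neg (show y ∉ {x : BV n | H.mulVec x = 0} from h), if_neg h, zero_mul]
      _ = ∑ y ∈ Finset.univ.filter (fun y => H.mulVec y = 0), (1/(c:ℝ)) * P (x - y) := by
          rw [← Finset.sum_filter]
      _ = ∑ z ∈ Finset.univ.filter (fun z => H.mulVec z = H.mulVec x), (1/(c:ℝ)) * P z := by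
          refine Finset.sum_bij' (fun (y : BV n) _ => x - y) (fun (z : BV n) _ => x - z)
            ?_ ?_ ?_ ?_ ?_
          · intro a ha
            simp only [mem_filter, mem_univ, true_and] at ha ⊢
            rw [Matrix.mulVec_sub, ha, sub_zero]
          · intro a ha
            simp only [mem_filter, mem_univ, true_and] at ha ⊢
            rw [Matrix.mulVec_sub, ha, sub_self]
          · intro a _
            exact sub_sub_cancel x a
          · intro a _
            exact sub_sub_cancel x a
          · intro a _
            rfl
      _ = (1 / c) * pmfMap H P (H.mulVec x) := by
          unfold pmfMap
          rw [Finset.mul_sum]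
  -- main equality
  have hmain : dTV (pmfMap H P) (unif (BV (n - k)))
      = dTV (conv (unifOn {x : BV n | H.mulVec x = 0}) P) (unif (BV n)) := by
    unfold dTV
    congr 1
    have hstep : ∑ x : BV n, |conv (unifOn {x : BV n | H.mulVec x = 0}) P x - unif (BV n) x|
        = ∑ u : BV (n - k), (c : ℝ) * |(1 / c) * pmfMap H P u - unif (BV n) 0| := by
      have : ∀ x : BV n, |conv (unifOn {x : BV n | H.mulVec x = 0}) P x - unif (BV n) x|
          = (fun u => |(1 / c) * pmfMap H P u - unif (BV n) 0|) (H.mulVec x) := by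
        intro x; rw [hconv]; rfl
      rw [Finset.sum_congr rfl (fun x _ => this x)]
      rw [Finset.sum_comp (fun u => |(1 / (c:ℝ)) * pmfMap H P u - unif (BV n) 0|) H.mulVec]
      rw [Finset.image_univ_of_surjective hsurj]
      apply Finset.sum_congr rfl
      intro u _
      rw [hfiber u, nsmul_eq_mul]
    rw [hstep]
    apply Finset.sum_congr rfl
    intro u _
    have h2n : (Fintype.card (BV n) : ℝ) = 2 ^ n := by
      simp [Fintype.card_fun]
    have h2nk : (Fintype.card (BV (n-k)) : ℝ) = 2 ^ (n-k) := by
      simp [Fintype.card_fun]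
    have hcne : (c : ℝ) ≠ 0 := by
      exact_mod_cast hc_pos.ne'
    have habs : (c:ℝ) * |(1 / c) * pmfMap H P u - unif (BV n) 0|
        = |(c:ℝ) * ((1 / c) * pmfMap H P u - unif (BV n) 0)| := by
      rw [abs_mul, abs_of_nonneg (show (0:ℝ) ≤ c from Nat.cast_nonneg c)]
    rw [habs]
    congr 1
    have hck : (c:ℝ) * (1 / 2^n) = 1 / 2^(n-k) := by
      rw [mul_one_div, div_eq_div_iff (by positivity) (by positivity), one_mul]
      linarith [hcount]
    unfold unif
    rw [h2n, h2nk, mul_sub, ← mul_assoc, mul_one_div_cancel hcne, one_mul, hck]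
  exact ⟨hmain, fun ε => by rw [hmain]⟩
end

section
/- Let C_0 ⊆ F_2^n be a nonempty code whose distinct elements are at pairwise Hamming distance at least d, let t = ⌊(d−1)/2⌋, and let ε > 0. If ρ is a pmf on F_2^n satisfying d_TV(P_{C_0} ∗ ρ, U_n) ≤ ε, then Σ_{x : |x| ≤ t} ρ(x) ≤ |C_0|·V_n(t)/2^n + ε, and also Σ_{x : |x| ≥ n−t} ρ(x) ≤ |C_0|·V_n(t)/2^n + ε. -/
/-!
Averaging the translates `c + T`, `c ∈ C₀`, each of which lies in the sumset `C₀ + T`, shows that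
`ρ(T) ≤ (P_{C₀} ∗ ρ)(C₀ + T)`. Closeness to uniform in total variation bounds the right side by
`|C₀ + T| / 2ⁿ + ε ≤ |C₀| |T| / 2ⁿ + ε`. Take `T` the Hamming ball of radius `t`; adding the
all-ones vector maps the vectors of weight at least `n - t` bijectively onto that ball.
-/

open Finset Filter
open scoped Classical BigOperators Topology

open scoped Pointwise

section Weight

variable {n : ℕ}

lemma card_filter_wt_eq (j : ℕ) : #{x : BV n | wt x = j} = n.choose j := by
  have ne_zero_iff : ∀ a : ZMod 2, a ≠ 0 ↔ a = 1 := by decide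
  have hchoose : n.choose j = #(powersetCard j (univ : Finset (Fin n))) := by simp
  rw [hchoose]
  refine card_nbij' (fun x => ({i | x i ≠ 0} : Finset (Fin n)))
    (fun s i => if i ∈ s then 1 else 0) ?_ ?_ ?_ ?_
  · intro x hx
    simpa [wt] using hx
  · intro s hs
    simp_all [wt]
  · intro x _
    funext i
    by_cases hi : x i = 0 <;> simp_all
  · intro s _
    ext i
    by_cases hi : i ∈ s <;> simp [hi]

lemma card_filter_wt_le (t : ℕ) : #{x : BV n | wt x ≤ t} = Vball n t := by
  rw [Vball, card_eq_sum_card_fiberwise (f := wt) (t := range (t + 1))]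
  · refine sum_congr rfl fun j hj => ?_
    rw [← card_filter_wt_eq j, filter_filter]
    congr 1
    ext x
    simp only [mem_filter, mem_univ, true_and, mem_range] at hj ⊢
    constructor
    · exact And.right
    · rintro rfl; exact ⟨Nat.lt_succ_iff.mp hj, rfl⟩
  · intro x hx
    simpa [Nat.lt_succ_iff] using hx

lemma wt_le (x : BV n) : wt x ≤ n :=
  (card_le_univ _).trans_eq (Fintype.card_fin n)

lemma wt_add_one (x : BV n) : wt (x + 1) = n - wt x := by
  have add_one_ne_zero_iff : ∀ a : ZMod 2, a + 1 ≠ 0 ↔ ¬ a ≠ 0 := by decide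
  have h := card_filter_add_card_filter_not (s := (univ : Finset (Fin n))) (fun i => x i ≠ 0)
  simp only [card_univ, Fintype.card_fin] at h
  simp only [wt, Pi.add_apply, Pi.one_apply, add_one_ne_zero_iff]
  omega

lemma add_one_add_one (x : BV n) : x + 1 + 1 = x := by
  rw [add_assoc, add_eq_left]
  funext i
  exact (by decide : (1 + 1 : ZMod 2) = 0)

lemma card_filter_sub_le_wt (t : ℕ) : #{x : BV n | n - t ≤ wt x} = Vball n t := by
  rw [← card_filter_wt_le t]
  refine card_nbij' (· + 1) (· + 1) ?_ ?_ (fun x _ => add_one_add_one x)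
    (fun x _ => add_one_add_one x)
  all_goals
    intro x hx
    have := wt_le x
    simp only [coe_filter, mem_univ, true_and, Set.mem_ofPred_eq, wt_add_one] at hx ⊢
    omega

end Weight

section Distributions

variable {α : Type*} [Fintype α]

lemma sum_le_sum_add_dTV {P Q : α → ℝ} (h : ∑ x, P x = ∑ x, Q x) (B : Finset α) :
    ∑ x ∈ B, P x ≤ ∑ x ∈ B, Q x + dTV P Q := by
  have hsplit := sum_add_sum_compl B (fun x => P x - Q x)
  have habs := sum_add_sum_compl B (fun x => |P x - Q x|)
  have hB : ∑ x ∈ B, (P x - Q x) ≤ ∑ x ∈ B, |P x - Q x| :=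
    sum_le_sum fun x _ => le_abs_self _
  have hBc : -∑ x ∈ Bᶜ, (P x - Q x) ≤ ∑ x ∈ Bᶜ, |P x - Q x| := by
    rw [← sum_neg_distrib]
    exact sum_le_sum fun x _ => neg_le_abs _
  simp only [sum_sub_distrib, h, sub_self] at hsplit hB hBc
  rw [dTV]
  linarith

lemma sum_unif (B : Finset α) : ∑ x ∈ B, unif α x = #B / Fintype.card α := by
  simp [unif, div_eq_mul_inv]

lemma sum_univ_unif [Nonempty α] : ∑ x, unif α x = 1 := by
  rw [sum_unif, card_univ]
  exact div_self (by positivity)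

lemma unifOn_nonneg (S : Set α) (x : α) : 0 ≤ unifOn S x := by
  unfold unifOn
  split_ifs <;> positivity

lemma unifOn_coe_finset (C : Finset α) (x : α) :
    unifOn (↑C : Set α) x = if x ∈ C then (1 / #C : ℝ) else 0 := by
  simp [unifOn]

lemma sum_unifOn {C : Finset α} (hC : C.Nonempty) : ∑ x ∈ C, unifOn (↑C : Set α) x = 1 := by
  rw [sum_congr rfl fun x hx => by rw [unifOn_coe_finset, if_pos hx], sum_const, nsmul_eq_mul,
    mul_one_div, div_self (by exact_mod_cast hC.card_pos.ne')]

lemma sum_univ_unifOn {C : Finset α} (hC : C.Nonempty) : ∑ x, unifOn (↑C : Set α) x = 1 := by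
  rw [← sum_unifOn hC]
  exact (sum_subset (subset_univ C) fun x _ hx => by rw [unifOn_coe_finset, if_neg hx]).symm

end Distributions

section Convolution

variable {n : ℕ}

lemma sum_conv (P Q : BV n → ℝ) : ∑ z, conv P Q z = (∑ y, P y) * ∑ x, Q x := by
  simp_rw [conv, sum_mul, mul_sum]
  rw [sum_comm]
  exact sum_congr rfl fun y _ => Fintype.sum_equiv (Equiv.subRight y) _ _ fun _ => rfl

lemma sum_mul_sum_le_sum_conv_add {P Q : BV n → ℝ} (hP : ∀ y, 0 ≤ P y) (hQ : ∀ x, 0 ≤ Q x)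
    (S T : Finset (BV n)) : (∑ y ∈ S, P y) * ∑ x ∈ T, Q x ≤ ∑ z ∈ S + T, conv P Q z := by
  have translate : ∀ y ∈ S, ∑ x ∈ T, Q x ≤ ∑ z ∈ S + T, Q (z - y) := fun y hy =>
    calc ∑ x ∈ T, Q x = ∑ z ∈ T.image (y + ·), Q (z - y) := by
          rw [sum_image (add_right_injective y).injOn]
          simp
      _ ≤ ∑ z ∈ S + T, Q (z - y) :=
          sum_le_sum_of_subset_of_nonneg (image_subset_iff.2 fun x hx => add_mem_add hy hx)
            fun _ _ _ => hQ _
  calc (∑ y ∈ S, P y) * ∑ x ∈ T, Q x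
      ≤ ∑ y ∈ S, P y * ∑ z ∈ S + T, Q (z - y) := by
        rw [sum_mul]
        exact sum_le_sum fun y hy => mul_le_mul_of_nonneg_left (translate y hy) (hP y)
    _ ≤ ∑ y, P y * ∑ z ∈ S + T, Q (z - y) :=
        sum_le_sum_of_subset_of_nonneg (subset_univ S)
          fun y _ _ => mul_nonneg (hP y) (sum_nonneg fun _ _ => hQ _)
    _ = ∑ z ∈ S + T, conv P Q z := by
        simp_rw [conv, mul_sum]
        exact sum_comm

lemma sum_le_of_dTV_conv_unifOn_le {C : Finset (BV n)} (hC : C.Nonempty) {ρ : BV n → ℝ}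
    (hρ : IsPMF ρ) {ε : ℝ} (ht : dTV (conv (unifOn (↑C : Set (BV n))) ρ) (unif (BV n)) ≤ ε)
    (T : Finset (BV n)) : ∑ x ∈ T, ρ x ≤ #C * #T / 2 ^ n + ε := by
  have hcard : (Fintype.card (BV n) : ℝ) = 2 ^ n := by simp [ZMod.card]
  have hmass : ∑ z, conv (unifOn (↑C : Set (BV n))) ρ z = ∑ z, unif (BV n) z := by
    rw [sum_conv, sum_univ_unifOn hC, hρ.2, sum_univ_unif, one_mul]
  have hsumset : (#(C + T) : ℝ) ≤ #C * #T := by exact_mod_cast card_add_le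
  calc ∑ x ∈ T, ρ x = (∑ y ∈ C, unifOn (↑C : Set (BV n)) y) * ∑ x ∈ T, ρ x := by
        rw [sum_unifOn hC, one_mul]
    _ ≤ ∑ z ∈ C + T, conv (unifOn (↑C : Set (BV n))) ρ z :=
        sum_mul_sum_le_sum_conv_add (unifOn_nonneg _) hρ.1 C T
    _ ≤ ∑ z ∈ C + T, unif (BV n) z + dTV (conv (unifOn (↑C : Set (BV n))) ρ) (unif (BV n)) :=
        sum_le_sum_add_dTV hmass _
    _ ≤ #C * #T / 2 ^ n + ε := by
        rw [sum_unif, hcard]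
        gcongr

end Convolution

theorem flatness_lemma_general (n d : ℕ) (C0 : Finset (BV n)) (hC0 : C0.Nonempty)
    (ε : ℝ) (ρ : BV n → ℝ) (hρ : IsPMF ρ)
    (ht : dTV (conv (unifOn (↑C0 : Set (BV n))) ρ) (unif (BV n)) ≤ ε) :
    (∑ x ∈ Finset.univ.filter (fun x : BV n => wt x ≤ (d - 1) / 2), ρ x
        ≤ (C0.card : ℝ) * (Vball n ((d - 1) / 2) : ℝ) / 2 ^ n + ε) ∧
    (∑ x ∈ Finset.univ.filter (fun x : BV n => n - (d - 1) / 2 ≤ wt x), ρ x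
        ≤ (C0.card : ℝ) * (Vball n ((d - 1) / 2) : ℝ) / 2 ^ n + ε) := by
  have flat := sum_le_of_dTV_conv_unifOn_le hC0 hρ ht
  constructor
  · simpa only [card_filter_wt_le] using flat {x | wt x ≤ (d - 1) / 2}
  · simpa only [card_filter_sub_le_wt] using flat {x | n - (d - 1) / 2 ≤ wt x}

theorem flatness_lemma (n d : ℕ) (C0 : Finset (BV n)) (hC0 : C0.Nonempty)
    (hdist : ∀ x ∈ C0, ∀ y ∈ C0, x ≠ y → d ≤ wt (x - y))
    (ε : ℝ) (hε : 0 < ε) (ρ : BV n → ℝ) (hρ : IsPMF ρ)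
    (ht : dTV (conv (unifOn (↑C0 : Set (BV n))) ρ) (unif (BV n)) ≤ ε) :
    (∑ x ∈ Finset.univ.filter (fun x : BV n => wt x ≤ (d - 1) / 2), ρ x
        ≤ (C0.card : ℝ) * (Vball n ((d - 1) / 2) : ℝ) / 2 ^ n + ε) ∧
    (∑ x ∈ Finset.univ.filter (fun x : BV n => n - (d - 1) / 2 ≤ wt x), ρ x
        ≤ (C0.card : ℝ) * (Vball n ((d - 1) / 2) : ℝ) / 2 ^ n + ε) :=
  flatness_lemma_general n d C0 hC0 ε ρ hρ ht
end

section
/- Let C' ⊆ F_2^n be a linear code of minimum distance at least 3, let γ ∈ [0,1], and let P_Z = (1−γ)·U_n + γ·1_{S(0,1)}/n. Then d_TV(P_{C'} ∗ P_Z, U_n) = γ·(1 − n·|C'|/2^n). -/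
open Finset Filter
open scoped Classical BigOperators Topology

/-! Convolving `P_{C'}` with the noise `(1 - γ) U_n + γ 1_{S(0,1)} / n` gives
`(1 - γ) U_n + γ P_D` with `D = C' + S(0,1)`: since the minimum distance is at least 3, the
radius-one spheres around distinct codewords are disjoint, so each point lies on at most one of
them and `|D| = n |C'|`. The total variation distance to `U_n` is therefore
`γ d_TV(P_D, U_n) = γ (1 - |D| / 2^n)`. -/

open scoped Pointwise

lemma wt_sub_eq_hammingDist {n : ℕ} (x y : BV n) : wt (x - y) = hammingDist x y := by
  simp only [wt, hammingDist, Pi.sub_apply, ne_eq, sub_eq_zero]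

lemma wt_eq_one_iff {n : ℕ} {x : BV n} : wt x = 1 ↔ ∃ i, x = Pi.single i 1 := by
  have hZMod2 : ∀ a : ZMod 2, a ≠ 0 ↔ a = 1 := by decide
  simp only [wt, Finset.card_eq_one, Finset.ext_iff, mem_filter, mem_univ, true_and,
    mem_singleton, funext_iff, Pi.single_apply]
  refine exists_congr fun i => forall_congr' fun j => ?_
  split_ifs with h
  · simp [h, hZMod2]
  · simp [h]

def sphereOne (n : ℕ) : Finset (BV n) := {x | wt x = 1}

lemma card_sphereOne (n : ℕ) : #(sphereOne n) = n := by
  have : sphereOne n = univ.image fun i => (Pi.single i 1 : BV n) := by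
    ext x
    simp [sphereOne, wt_eq_one_iff, eq_comm]
  rw [this, card_image_of_injective, card_univ, Fintype.card_fin]
  intro i j h
  simpa [Pi.single_apply] using congrFun h i

section Packing

variable {n : ℕ} {C : Finset (BV n)}

lemma eq_of_wt_sub_eq_one (hC : (C : Set (BV n)).Pairwise (3 ≤ hammingDist · ·))
    {x c₁ c₂ : BV n} (hc₁ : c₁ ∈ C) (hc₂ : c₂ ∈ C) (h₁ : wt (x - c₁) = 1)
    (h₂ : wt (x - c₂) = 1) : c₁ = c₂ := by
  by_contra hne
  have hfar := hC hc₁ hc₂ hne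
  have hnear := hammingDist_triangle c₁ x c₂
  rw [wt_sub_eq_hammingDist] at h₁ h₂
  rw [hammingDist_comm c₁ x, h₁, h₂] at hnear
  omega

lemma card_add_sphereOne (hC : (C : Set (BV n)).Pairwise (3 ≤ hammingDist · ·)) :
    #(C + sphereOne n) = #C * n := by
  suffices hinj : Set.InjOn (fun p => p.1 + p.2) (C ×ˢ sphereOne n : Set (BV n × BV n)) by
    rw [Finset.card_add_iff.2 hinj, card_sphereOne]
  rintro ⟨c₁, s₁⟩ ⟨hc₁, hs₁⟩ ⟨c₂, s₂⟩ ⟨hc₂, hs₂⟩ (h : c₁ + s₁ = c₂ + s₂)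
  simp only [sphereOne, coe_filter, mem_coe, Set.mem_ofPred_eq] at hc₁ hc₂ hs₁ hs₂
  obtain rfl : c₁ = c₂ := eq_of_wt_sub_eq_one (x := c₁ + s₁) hC hc₁ hc₂
    (by simpa using hs₁) (by simpa [h] using hs₂)
  simp_all

lemma card_filter_wt_sub_eq_one (hC : (C : Set (BV n)).Pairwise (3 ≤ hammingDist · ·))
    (x : BV n) : #{c ∈ C | wt (x - c) = 1} = if x ∈ C + sphereOne n then 1 else 0 := by
  split_ifs with hx
  · obtain ⟨c, hc, s, hs, rfl⟩ := mem_add.1 hx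
    refine card_eq_one.2 ⟨c, eq_singleton_iff_unique_mem.2 ⟨?_, ?_⟩⟩
    · simpa [hc, sphereOne] using hs
    · intro c' hc'
      exact eq_of_wt_sub_eq_one hC (mem_filter.1 hc').1 hc (mem_filter.1 hc').2
        (by simpa [sphereOne] using hs)
  · refine card_eq_zero.2 (filter_eq_empty_iff.2 fun c hc h => hx ?_)
    exact mem_add.2 ⟨c, hc, x - c, by simpa [sphereOne] using h, by abel⟩

end Packing

section TotalVariation

variable {α : Type*} [Fintype α]

lemma dTV_mix_self (γ : ℝ) (P Q : α → ℝ) :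
    dTV (fun x => (1 - γ) * Q x + γ * P x) Q = |γ| * dTV P Q := by
  have hdiff : ∀ x, (1 - γ) * Q x + γ * P x - Q x = γ * (P x - Q x) := fun x => by ring
  simp only [dTV, hdiff, abs_mul, ← mul_sum]
  ring

lemma dTV_unifOn_unif {S : Set α} (hS : S.Nonempty) :
    dTV (unifOn S) (unif α) = 1 - Nat.card S / Fintype.card α := by
  have hk : (0 : ℝ) < Nat.card S := by
    have := hS.to_subtype
    exact_mod_cast Nat.card_pos
  have hkM : (Nat.card S : ℝ) ≤ Fintype.card α := by
    exact_mod_cast (Nat.card_le_card_of_injective _ Subtype.val_injective).trans_eq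
      Nat.card_eq_fintype_card
  have hterm : ∀ x, |unifOn S x - unif α x| = 1 / Fintype.card α
      + if x ∈ S then (1 / Nat.card S - 2 / Fintype.card α : ℝ) else 0 := by
    intro x
    have : (1 : ℝ) / Fintype.card α ≤ 1 / Nat.card S := one_div_le_one_div_of_le hk hkM
    by_cases hx : x ∈ S
    · simp only [unifOn, unif, hx, if_true]
      rw [abs_of_nonneg (by linarith)]
      ring
    · simp [unifOn, unif, hx]
  have hcard : #{x | x ∈ S} = Nat.card S := by
    rw [Set.filter_mem_univ_eq_toFinset, Set.toFinset_card, Nat.card_eq_fintype_card]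
  simp only [dTV, hterm, sum_add_distrib, ← sum_filter, sum_const, card_univ, hcard, nsmul_eq_mul]
  have hM : (Fintype.card α : ℝ) ≠ 0 := (hk.trans_le hkM).ne'
  field_simp
  ring

end TotalVariation

lemma conv_unifOn_apply {n : ℕ} (S : Set (BV n)) (Q : BV n → ℝ) (x : BV n) :
    conv (unifOn S) Q x = (∑ c ∈ S.toFinset, Q (x - c)) / Nat.card S := by
  simp only [conv, unifOn, ite_mul, zero_mul, ← sum_filter, Set.filter_mem_univ_eq_toFinset,
    sum_div, one_div_mul_eq_div]

lemma conv_unifOn_eq_mix_unifOn_add_sphereOne {n : ℕ} {C : Finset (BV n)}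
    (hC : (C : Set (BV n)).Pairwise (3 ≤ hammingDist · ·)) (hCne : C.Nonempty) (γ : ℝ) :
    conv (unifOn (C : Set (BV n)))
        (fun x => (1 - γ) * (1 / 2 ^ n) + γ * (if wt x = 1 then 1 else 0) / n)
      = fun x => (1 - γ) * unif (BV n) x + γ * unifOn ↑(C + sphereOne n) x := by
  ext x
  have hN : (#C : ℝ) ≠ 0 := by exact_mod_cast hCne.card_pos.ne'
  have hcount : ∑ c ∈ C, (if wt (x - c) = 1 then 1 else 0 : ℝ)
      = if x ∈ C + sphereOne n then 1 else 0 := by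
    rw [sum_boole, card_filter_wt_sub_eq_one hC]
    split_ifs <;> simp
  simp only [conv_unifOn_apply, Finset.toFinset_coe, Nat.card_coe_set_eq, Set.ncard_coe_finset,
    sum_add_distrib, sum_const, nsmul_eq_mul, mul_div_assoc, ← mul_sum, ← sum_div, hcount]
  simp only [unifOn, unif, mem_coe, Nat.card_coe_set_eq, Set.ncard_coe_finset,
    card_add_sphereOne hC]
  have hcard : Fintype.card (BV n) = 2 ^ n := by simp
  split_ifs <;> push_cast [hcard] <;> field_simp
  ring

theorem smoothing_distance_three_code (n : ℕ) (hn : 1 ≤ n)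
    (Cp : Submodule (ZMod 2) (BV n))
    (hdist : ∀ x ∈ Cp, x ≠ 0 → 3 ≤ wt x)
    (γ : ℝ) (hγ : γ ∈ Set.Icc (0 : ℝ) 1)
    (P : BV n → ℝ)
    (hPdef : P = fun x => (1 - γ) * (1 / 2 ^ n) + γ * (if wt x = 1 then 1 else 0) / n) :
    dTV (conv (unifOn (Cp : Set (BV n))) P) (unif (BV n))
      = γ * (1 - n * (Nat.card Cp : ℝ) / 2 ^ n) := by
  set C := (Cp : Set (BV n)).toFinset
  have hC : (C : Set (BV n)).Pairwise (3 ≤ hammingDist · ·) := by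
    intro c₁ hc₁ c₂ hc₂ hne
    simp only [C, Set.coe_toFinset, SetLike.mem_coe] at hc₁ hc₂
    rw [← wt_sub_eq_hammingDist]
    exact hdist _ (Cp.sub_mem hc₁ hc₂) (sub_ne_zero.2 hne)
  have hCne : C.Nonempty := ⟨0, by simp [C]⟩
  have hcover : ((C + sphereOne n : Finset (BV n)) : Set (BV n)).Nonempty := by
    rw [coe_nonempty]
    exact hCne.add (card_pos.1 ((card_sphereOne n).symm ▸ hn))
  rw [hPdef, ← Set.coe_toFinset (Cp : Set (BV n)),
    conv_unifOn_eq_mix_unifOn_add_sphereOne hC hCne, dTV_mix_self, dTV_unifOn_unif hcover,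
    abs_of_nonneg hγ.1]
  have hN : Nat.card Cp = #C := Nat.card_eq_card_toFinset (Cp : Set (BV n))
  rw [Nat.card_coe_set_eq, Set.ncard_coe_finset, card_add_sphereOne hC, hN]
  simp [mul_comm]
end
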